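/- arXiv:2512.00252 — 2 statements merged into one kernel-verified Lean document; each statement's English description precedes it below -/
import Mathlib

section
/- Let b(t, z) := E[α̇_t z_1 + β̇_t z_0 | z_t = z] be the drift of the interpolant z_t = α_t z_1 + β_t z_0 and s(t,z) its score. If γ_t := α̇_t β_t − α_t β̇_t ≠ 0 and α_t, β_t > 0, then s(t, z) = (α_t b(t, z) − α̇_t z) / (β_t γ_t) and E[z_1 | z_t = z] = (β_t b(t, z) − β̇_t z) / γ_t. -/
/-- Relations between the drift `b(t,z) = E[α̇_t z_1 + β̇_t z_0 | z_t = z]`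
and the score: if `γ_t = α̇_t β_t − α_t β̇_t ≠ 0` and `α_t, β_t > 0`, then
`s(t,z) = (α_t b(t,z) − α̇_t z)/(β_t γ_t)` and `E[z_1 | z_t = z] = (β_t b(t,z) − β̇_t z)/γ_t`. -/
theorem score_and_posterior_mean_from_drift
    (d : ℕ) (α β α' β' γ : ℝ) (hα : 0 < α) (hβ : 0 < β)
    (hγ : γ = α' * β - α * β') (hγne : γ ≠ 0)
    (b E1 E0 s : EuclideanSpace ℝ (Fin d) → EuclideanSpace ℝ (Fin d))
    -- the drift is b(t,z) = α̇_t E[z_1 | z_t = z] + β̇_t E[z_0 | z_t = z]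
    (hb : ∀ z, b z = α' • E1 z + β' • E0 z)
    -- score identity E[z_0 | z_t] = -β_t s(t, z_t)
    (hE0 : ∀ z, E0 z = -β • s z)
    -- decomposition z_t = α_t E[z_1 | z_t] + β_t E[z_0 | z_t]
    (hdecomp : ∀ z, z = α • E1 z + β • E0 z)
    (z : EuclideanSpace ℝ (Fin d)) :
    s z = ((β * γ)⁻¹) • (α • b z - α' • z) ∧
      E1 z = (γ⁻¹) • (β • b z - β' • z) := by
  have hβγ : β * γ ≠ 0 := mul_ne_zero (ne_of_gt hβ) hγne
  subst hγ
  have h1 : α • b z - α' • z = ((α' * β - α * β') * β) • s z := by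
    linear_combination (norm := module) α • hb z - α' • hdecomp z - (α' * β - α * β') • hE0 z
  have h2 : β • b z - β' • z = (α' * β - α * β') • E1 z := by
    linear_combination (norm := module) β • hb z - β' • hdecomp z
  constructor
  · rw [h1, mul_comm β, smul_smul, inv_mul_cancel₀ (mul_ne_zero hγne (ne_of_gt hβ)), one_smul]
  · rw [h2, smul_smul, inv_mul_cancel₀ hγne, one_smul]
end

section
/- Let p_1 be a probability density on R^d and define the posterior density p_1^y(x) = p(y|x) p_1(x)/p(y) with p(y) = ∫ p(y|x) p_1(x) dx > 0. Let p_t and p_t^y be the time-t marginal densities of the interpolants z_t = α_t z_1 + β_t z_0 with z_1 ~ p_1 and z_1 ~ p_1^y respectively (same z_0 ~ N(0,I) and same schedule). Then p_t^y(z) = p_t(z) p(y | z_t = z) / p(y), where p(y | z_t = z) = ∫ p(y | z_1) p(z_1 | z_t = z) dz_1 is computed under the unconditional model. -/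
open MeasureTheory Real

/-- Marginal density of the posterior interpolant. With posterior
density `p_1^y(x) = p(y|x) p_1(x) / p(y)`, `p(y) = ∫ p(y|x) p_1(x) dx > 0`, and
both interpolants sharing the Gaussian transition `K(z, x) = N(z; α_t x, β_t² I)`,
the time-`t` marginals satisfy `p_t^y(z) = p_t(z) p(y | z_t = z) / p(y)`, where
`p(y | z_t = z) = ∫ p(y|x) p(x | z_t = z) dx = p_t(z)⁻¹ ∫ K(z,x) p(y|x) p_1(x) dx`. -/
theorem posterior_interpolant_marginal
    (d : ℕ) (α β : ℝ) (hβ : 0 < β)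
    (p1 lik : EuclideanSpace ℝ (Fin d) → ℝ)
    (hp1 : ∀ x, 0 ≤ p1 x) (hlik : ∀ x, 0 ≤ lik x)
    (py : ℝ) (hpy : py = ∫ x, lik x * p1 x) (hpypos : 0 < py)
    (p1y : EuclideanSpace ℝ (Fin d) → ℝ)
    (hp1y : ∀ x, p1y x = lik x * p1 x / py)
    (K : EuclideanSpace ℝ (Fin d) → EuclideanSpace ℝ (Fin d) → ℝ)
    (hK : ∀ z x, K z x =
      (2 * π * β ^ 2) ^ (-(d : ℝ) / 2) * Real.exp (-‖z - α • x‖ ^ 2 / (2 * β ^ 2)))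
    (pt pty likt : EuclideanSpace ℝ (Fin d) → ℝ)
    (hpt : ∀ z, pt z = ∫ x, K z x * p1 x)
    (hpty : ∀ z, pty z = ∫ x, K z x * p1y x)
    (hptpos : ∀ z, 0 < pt z)
    -- p(y | z_t = z), computed under the unconditional model
    (hlikt : ∀ z, likt z = (pt z)⁻¹ * ∫ x, lik x * (K z x * p1 x))
    (z : EuclideanSpace ℝ (Fin d)) :
    pty z = pt z * likt z / py := by
  have h1 : pty z = (∫ x, lik x * (K z x * p1 x)) / py := by
    rw [hpty]
    rw [show (fun x => K z x * p1y x) = fun x => (lik x * (K z x * p1 x)) / py by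
      funext x; rw [hp1y]; ring]
    exact integral_div py _
  rw [h1, hlikt]
  field_simp [(hptpos z).ne']
end
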